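/- Equality part of Theorem 1.5. Let M, N : R^n → vec be finitely presentable persistence modules. Let (P, Q) and (P', Q') be minimal Hilbert decompositions of Hil(M) and Hil(N), and let ℬβ(M) and ℬβ(N) be the Betti signed barcodes of M and N. Then d̂_{W¹}((ℬ(P), ℬ(Q)), (ℬ(P'), ℬ(Q'))) = d̂_{W¹}(ℬβ(M), ℬβ(N)). -/

import Mathlib

set_option linter.unusedVariables false
set_option maxHeartbeats 800000

open scoped Classical ENNReal

noncomputable section

/-- Points of `R^n`. The metric on `Fin n → ℝ` is the sup-metric, so `dist` is `‖·‖_∞`. -/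
abbrev Pt (n : ℕ) := Fin n → ℝ

/-- An `n`-parameter persistence module: a functor from the poset `R^n`
to finite-dimensional `k`-vector spaces. -/
structure PersMod (k : Type) [Field k] (n : ℕ) where
  X : Pt n → Type
  [acg : ∀ r, AddCommGroup (X r)]
  [mod : ∀ r, Module k (X r)]
  [fd : ∀ r, FiniteDimensional k (X r)]
  map : ∀ {r s : Pt n}, r ≤ s → (X r →ₗ[k] X s)
  map_id : ∀ r : Pt n, map (le_refl r) = LinearMap.id
  map_comp : ∀ {r s t : Pt n} (h₁ : r ≤ s) (h₂ : s ≤ t),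
    (map h₂).comp (map h₁) = map (h₁.trans h₂)

attribute [instance] PersMod.acg PersMod.mod PersMod.fd

variable {k : Type} [Field k] {n : ℕ}

/-- A morphism of persistence modules: a natural transformation. -/
structure PersHom (M N : PersMod k n) where
  app : ∀ r, M.X r →ₗ[k] N.X r
  natural : ∀ {r s : Pt n} (h : r ≤ s),
    (N.map h).comp (app r) = (app s).comp (M.map h)

def shiftPt (ε : ℝ) (r : Pt n) : Pt n := fun i => r i + ε

lemma shiftPt_mono {ε : ℝ} {r s : Pt n} (h : r ≤ s) : shiftPt ε r ≤ shiftPt ε s :=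
  fun i => add_le_add (h i) (le_refl ε)

lemma le_shiftPt {ε : ℝ} (hε : 0 ≤ ε) (r : Pt n) : r ≤ shiftPt ε r :=
  fun i => le_add_of_nonneg_right hε

/-- The `ε`-shift of a persistence module. -/
def PersMod.shift (M : PersMod k n) (ε : ℝ) : PersMod k n where
  X r := M.X (shiftPt ε r)
  map h := M.map (shiftPt_mono h)
  map_id r := M.map_id _
  map_comp h₁ h₂ := M.map_comp _ _

/-- `M` and `N` are `ε`-interleaved. -/
def Interleaved (ε : ℝ) (M N : PersMod k n) : Prop :=
  ∃ hε : 0 ≤ ε,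
  ∃ (f : PersHom M (N.shift ε)) (g : PersHom N (M.shift ε)),
    (∀ r : Pt n, (g.app (shiftPt ε r)).comp (f.app r)
        = M.map ((le_shiftPt hε r).trans (le_shiftPt hε _))) ∧
    (∀ r : Pt n, (f.app (shiftPt ε r)).comp (g.app r)
        = N.map ((le_shiftPt hε r).trans (le_shiftPt hε _)))

/-- The interleaving distance. -/
def interleavingDist (M N : PersMod k n) : ℝ≥0∞ :=
  sInf { e : ℝ≥0∞ | ∃ ε : ℝ, e = ENNReal.ofReal ε ∧ Interleaved ε M N }

/-- The free persistence module `⊕_i F_{L i}`, where `F_j` is the "upset" interval module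
generated at `j`. -/
def freeModFin {m : ℕ} (L : Fin m → Pt n) : PersMod k n where
  X r := {i : Fin m // L i ≤ r} → k
  map {r s} h :=
    { toFun := fun f i => if h' : L i.1 ≤ r then f ⟨i.1, h'⟩ else 0
      map_add' := by
        intro f g; funext i
        by_cases h' : L i.1 ≤ r <;> simp [h']
      map_smul' := by
        intro c f; funext i
        by_cases h' : L i.1 ≤ r <;> simp [h'] }
  map_id r := by
    apply LinearMap.ext; intro f; funext i
    show (if h' : L i.1 ≤ r then f ⟨i.1, h'⟩ else 0) = f i
    rw [dif_pos i.2]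
  map_comp {r s t} h₁ h₂ := by
    apply LinearMap.ext; intro f; funext i
    show (if hs : L i.1 ≤ s then
            (if hr : L i.1 ≤ r then f ⟨i.1, hr⟩ else 0) else 0)
        = (if hr : L i.1 ≤ r then f ⟨i.1, hr⟩ else 0)
    by_cases hr : L i.1 ≤ r
    · simp [hr, hr.trans h₁]
    · simp [hr]

/-- Isomorphism of persistence modules. -/
def PersIso (M N : PersMod k n) : Prop :=
  ∃ (f : PersHom M N) (g : PersHom N M),
    (∀ r, (g.app r).comp (f.app r) = LinearMap.id) ∧
    (∀ r, (f.app r).comp (g.app r) = LinearMap.id)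

/-- `P` is free of finite rank with barcode `B`. -/
def IsFreeWith (P : PersMod k n) (B : Multiset (Pt n)) : Prop :=
  ∃ (m : ℕ) (L : Fin m → Pt n), B = (List.ofFn L : Multiset (Pt n)) ∧ PersIso P (freeModFin L)

/-- `M` is finitely presentable: it is (isomorphic to) the cokernel of a morphism
between free modules of finite rank. -/
def FinitelyPresentable (M : PersMod k n) : Prop :=
  ∃ (c r : ℕ) (Lc : Fin c → Pt n) (Lr : Fin r → Pt n)
    (f : PersHom (freeModFin Lc) (freeModFin Lr)) (g : PersHom (freeModFin Lr) M),
    (∀ x, Function.Surjective (g.app x)) ∧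
    (∀ x, LinearMap.range (f.app x) = LinearMap.ker (g.app x))

/-- A resolution of `M` of length `len`:
an exact sequence `0 → P_len → ⋯ → P_0 → M → 0` (encoded with `P j = 0` for `j > len`). -/
structure Res (M : PersMod k n) where
  len : ℕ
  P : ℕ → PersMod k n
  d : ∀ j : ℕ, PersHom (P (j + 1)) (P j)
  aug : PersHom (P 0) M
  aug_surj : ∀ r, Function.Surjective (aug.app r)
  exact_zero : ∀ r, LinearMap.range ((d 0).app r) = LinearMap.ker (aug.app r)
  exact_succ : ∀ (j : ℕ) (r), LinearMap.range ((d (j + 1)).app r) = LinearMap.ker ((d j).app r)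
  vanish : ∀ j, len < j → ∀ r, ∀ x : (P j).X r, x = 0

/-- Projectivity in the category of persistence modules
(where epimorphisms are the pointwise surjections). -/
def IsProjectiveMod (P : PersMod k n) : Prop :=
  ∀ (A B : PersMod k n) (e : PersHom A B), (∀ r, Function.Surjective (e.app r)) →
    ∀ f : PersHom P B, ∃ g : PersHom P A, ∀ r, (e.app r).comp (g.app r) = f.app r

/-- An `ε`-bijection between two multisets of points of `R^n`. -/
def IsMatching (ε : ℝ) (B C : Multiset (Pt n)) : Prop :=
  ∃ m : Multiset (Pt n × Pt n),
    m.map Prod.fst = B ∧ m.map Prod.snd = C ∧ ∀ p ∈ m, dist p.1 p.2 ≤ ε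

/-- The bottleneck distance between barcodes. -/
def bottleneckDist (B C : Multiset (Pt n)) : ℝ≥0∞ :=
  sInf { e : ℝ≥0∞ | ∃ ε : ℝ, 0 ≤ ε ∧ e = ENNReal.ofReal ε ∧ IsMatching ε B C }

/-- A signed barcode: a pair (positive part, negative part) of barcodes. -/
abbrev SignedBarcode (n : ℕ) := Multiset (Pt n) × Multiset (Pt n)

/-- The bottleneck dissimilarity on signed barcodes. -/
def dBhat (B C : SignedBarcode n) : ℝ≥0∞ :=
  bottleneckDist (B.1 + C.2) (C.1 + B.2)

/-- Binary direct sum of persistence modules. -/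
def PersMod.dsum (M N : PersMod k n) : PersMod k n where
  X r := M.X r × N.X r
  map h := (M.map h).prodMap (N.map h)
  map_id r := by
    apply LinearMap.ext; intro x
    show (M.map (le_refl r) x.1, N.map (le_refl r) x.2) = x
    rw [M.map_id, N.map_id]; rfl
  map_comp {r s t} h₁ h₂ := by
    apply LinearMap.ext; intro x
    show (M.map h₂ (M.map h₁ x.1), N.map h₂ (N.map h₁ x.2))
        = (M.map (h₁.trans h₂) x.1, N.map (h₁.trans h₂) x.2)
    rw [← M.map_comp h₁ h₂, ← N.map_comp h₁ h₂]; rfl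

/-- Finite direct sum of persistence modules. -/
def dsumFin {m : ℕ} (P : Fin m → PersMod k n) : PersMod k n where
  X r := ∀ j, (P j).X r
  map h := LinearMap.pi fun j => ((P j).map h).comp (LinearMap.proj j)
  map_id r := by
    apply LinearMap.ext; intro x; funext j
    show (P j).map (le_refl r) (x j) = x j
    rw [(P j).map_id]; rfl
  map_comp {r s t} h₁ h₂ := by
    apply LinearMap.ext; intro x; funext j
    show (P j).map h₂ ((P j).map h₁ (x j)) = (P j).map (h₁.trans h₂) (x j)
    rw [← (P j).map_comp h₁ h₂]; rfl

/-- The zero persistence module. -/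
def zeroMod : PersMod k n := freeModFin (fun i : Fin 0 => i.elim0)

/-- The Hilbert function of a persistence module. -/
def Hil (M : PersMod k n) (r : Pt n) : ℕ := Module.finrank k (M.X r)

/-- Number of points of `B` (with multiplicity) that are `≤ r`. -/
def countLe (B : Multiset (Pt n)) (r : Pt n) : ℕ := Multiset.card (B.filter (fun i => i ≤ r))

/-- `R` is a free resolution of `M` with barcodes `B j`. -/
def IsFreeRes {M : PersMod k n} (R : Res M) (B : ℕ → Multiset (Pt n)) : Prop :=
  ∀ j, IsFreeWith (R.P j) (B j)

/-- `R` is a minimal free resolution of `M` with barcodes `B j`: in every homological degree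
its term has minimal rank among all free resolutions of `M`. -/
def IsMinFreeRes {M : PersMod k n} (R : Res M) (B : ℕ → Multiset (Pt n)) : Prop :=
  IsFreeRes R B ∧
  ∀ (R' : Res M) (B' : ℕ → Multiset (Pt n)), IsFreeRes R' B' →
    ∀ j, Multiset.card (B j) ≤ Multiset.card (B' j)

/-- Multiset union of the `B j` over even `j ≤ ℓ`. -/
def evenPart (B : ℕ → Multiset (Pt n)) (ℓ : ℕ) : Multiset (Pt n) :=
  ∑ j ∈ Finset.range (ℓ + 1), if Even j then B j else 0

/-- Multiset union of the `B j` over odd `j ≤ ℓ`. -/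
def oddPart (B : ℕ → Multiset (Pt n)) (ℓ : ℕ) : Multiset (Pt n) :=
  ∑ j ∈ Finset.range (ℓ + 1), if ¬ Even j then B j else 0

/-- `S` is the Betti signed barcode of `M`: the pair (even Betti numbers, odd Betti numbers)
coming from a minimal free resolution of `M`. -/
def IsBettiOf (M : PersMod k n) (S : SignedBarcode n) : Prop :=
  ∃ (R : Res M) (B : ℕ → Multiset (Pt n)), IsMinFreeRes R B ∧
    S = (evenPart B R.len, oddPart B R.len)

/-- `(P, Q)` (with barcodes `BP`, `BQ`) is a minimal Hilbert decomposition of `η`. -/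
def IsMinHilbDecomp (η : Pt n → ℤ) (P Q : PersMod k n) (BP BQ : Multiset (Pt n)) : Prop :=
  IsFreeWith P BP ∧ IsFreeWith Q BQ ∧
  (∀ r, η r = (Hil P r : ℤ) - (Hil Q r : ℤ)) ∧
  ∀ x : Pt n, ¬ (x ∈ BP ∧ x ∈ BQ)

/-- The `ℓ¹`-distance on `R^n`. -/
def l1dist (x y : Pt n) : ℝ := ∑ i, |x i - y i|

/-- The 1-Wasserstein cost of a matching (encoded as a multiset of pairs). -/
def matchCost (m : Multiset (Pt n × Pt n)) : ℝ := (m.map fun p => l1dist p.1 p.2).sum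

/-- The 1-Wasserstein distance between barcodes. -/
def wassDist (B C : Multiset (Pt n)) : ℝ≥0∞ :=
  sInf { e : ℝ≥0∞ | ∃ m : Multiset (Pt n × Pt n),
    m.map Prod.fst = B ∧ m.map Prod.snd = C ∧ e = ENNReal.ofReal (matchCost m) }

/-- The signed 1-Wasserstein distance on signed barcodes. -/
def dW1hat (B C : SignedBarcode n) : ℝ≥0∞ := wassDist (B.1 + C.2) (C.1 + B.2)

/-- The reduction of a signed barcode: cancel common points with multiplicity. -/
def reduceSB (B : SignedBarcode n) : SignedBarcode n := (B.1 - B.2, B.2 - B.1)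

/-!
Both a minimal Hilbert decomposition `(P, Q)` and the Betti signed barcode `(E, O)` of `M`
express `Hil M` as a difference of Hilbert functions of free modules, so
`countLe E - countLe O = countLe BP - countLe BQ`. Since a finite multiset in a poset is
determined by its counting function `r ↦ #{x ≤ r}`, this gives `E + BQ = BP + O`, and as `BP`
and `BQ` are disjoint, `E = BP + D` and `O = BQ + D` for some `D`. The signed Wasserstein
distance is insensitive to such a common part `D`: a point on both sides of a matching can be
cut out at no extra cost by the triangle inequality.
-/

section Multiset

variable {α : Type*}

lemma Multiset.exists_eq_add_of_add_eq_add_of_disjoint {E O P Q : Multiset α}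
    (h : E + Q = P + O) (hPQ : ∀ x, ¬ (x ∈ P ∧ x ∈ Q)) : ∃ D, E = P + D ∧ O = Q + D := by
  refine ⟨E - P, ?_, ?_⟩ <;> ext x
  all_goals
    have hx := congrArg (Multiset.count x) h
    have hPQx : Multiset.count x P = 0 ∨ Multiset.count x Q = 0 := by
      simpa only [Multiset.count_eq_zero, ← not_and_or] using hPQ x
    simp only [Multiset.count_add, Multiset.count_sub] at hx ⊢
    omega

lemma Multiset.countP_le_pos_iff_mem [PartialOrder α] {B : Multiset α} {x : α}
    (hx : ∀ y ∈ B, y ≤ x → y = x) : 0 < B.countP (· ≤ x) ↔ x ∈ B := by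
  rw [Multiset.countP_pos]
  exact ⟨fun ⟨y, hy, hyx⟩ => hx y hy hyx ▸ hy, fun h => ⟨x, h, le_rfl⟩⟩

theorem Multiset.eq_of_countP_le_eq [PartialOrder α] {B C : Multiset α}
    (h : ∀ r, B.countP (· ≤ r) = C.countP (· ≤ r)) : B = C := by
  induction B using Multiset.strongInductionOn generalizing C with
  | ih B ih =>
    rcases eq_or_ne (B + C) 0 with hBC | hBC
    · rw [add_eq_zero] at hBC
      rw [hBC.1, hBC.2]
    obtain ⟨z, hz⟩ := Multiset.exists_mem_of_ne_zero hBC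
    -- a minimal point of `B + C` lies in both `B` and `C`, and can be cancelled
    obtain ⟨x, hxmin⟩ := Finset.exists_minimal ⟨z, Multiset.mem_toFinset.mpr hz⟩
    have hx : ∀ y ∈ B + C, y ≤ x → y = x := fun y hy hyx =>
      le_antisymm hyx (hxmin.2 (Multiset.mem_toFinset.mpr hy) hyx)
    have hB := Multiset.countP_le_pos_iff_mem fun y hy => hx y (Multiset.mem_add.mpr (.inl hy))
    have hC := Multiset.countP_le_pos_iff_mem fun y hy => hx y (Multiset.mem_add.mpr (.inr hy))
    have hxB : x ∈ B := by
      rcases Multiset.mem_add.mp (Multiset.mem_toFinset.mp hxmin.1) with hxB | hxC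
      · exact hxB
      · exact hB.mp (h x ▸ hC.mpr hxC)
    have hxC : x ∈ C := hC.mp (h x ▸ hB.mpr hxB)
    rw [← Multiset.cons_erase hxB, ← Multiset.cons_erase hxC]
    congr 1
    refine ih _ (Multiset.erase_lt.mpr hxB) fun r => ?_
    have hr := h r
    rw [← Multiset.cons_erase hxB, ← Multiset.cons_erase hxC, Multiset.countP_cons,
      Multiset.countP_cons] at hr
    omega

end Multiset

lemma countLe_eq_countP (B : Multiset (Pt n)) (r : Pt n) : countLe B r = B.countP (· ≤ r) :=
  (Multiset.countP_eq_card_filter _ _).symm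

lemma countLe_add (B C : Multiset (Pt n)) (r : Pt n) :
    countLe (B + C) r = countLe B r + countLe C r := by
  simp only [countLe_eq_countP, Multiset.countP_add]

lemma countLe_sum {ι : Type*} (s : Finset ι) (B : ι → Multiset (Pt n)) (r : Pt n) :
    countLe (∑ j ∈ s, B j) r = ∑ j ∈ s, countLe (B j) r := by
  simp only [countLe_eq_countP, ← Multiset.coe_countPAddMonoidHom, map_sum]

lemma add_eq_add_of_countLe_sub_eq {A B C D : Multiset (Pt n)}
    (h : ∀ r, (countLe A r : ℤ) - countLe B r = countLe C r - countLe D r) : A + D = C + B :=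
  Multiset.eq_of_countP_le_eq fun r => by
    have hr := h r
    simp only [← countLe_eq_countP, countLe_add]
    omega

lemma countLe_evenPart_sub_oddPart (B : ℕ → Multiset (Pt n)) (ℓ : ℕ) (r : Pt n) :
    (countLe (evenPart B ℓ) r : ℤ) - countLe (oddPart B ℓ) r
      = ∑ j ∈ Finset.range (ℓ + 1), (-1 : ℤ) ^ j * countLe (B j) r := by
  simp only [evenPart, oddPart, countLe_sum, Nat.cast_sum, ← Finset.sum_sub_distrib]
  refine Finset.sum_congr rfl fun j _ => ?_
  rcases Nat.even_or_odd j with hj | hj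
  · simp [hj, countLe]
  · simp [Nat.not_even_iff_odd.mpr hj, hj.neg_one_pow, countLe]

lemma PersIso.hil_eq {M N : PersMod k n} (h : PersIso M N) (r : Pt n) : Hil M r = Hil N r := by
  obtain ⟨f, g, hgf, hfg⟩ := h
  exact (LinearEquiv.ofLinearMap (f.app r) (g.app r) (hfg r) (hgf r)).finrank_eq

lemma hil_freeModFin {m : ℕ} (L : Fin m → Pt n) (r : Pt n) :
    Hil (freeModFin (k := k) L) r = countLe (List.ofFn L : Multiset (Pt n)) r := by
  have hL : (List.ofFn L : Multiset (Pt n)) = Finset.univ.val.map L := by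
    rw [List.ofFn_eq_map]; rfl
  rw [Hil, freeModFin, Module.finrank_fintype_fun_eq_card, Fintype.card_subtype,
    countLe_eq_countP, hL, Multiset.countP_map]
  rfl

lemma IsFreeWith.hil_eq {P : PersMod k n} {B : Multiset (Pt n)} (h : IsFreeWith P B)
    (r : Pt n) : Hil P r = countLe B r := by
  obtain ⟨m, L, rfl, hiso⟩ := h
  rw [hiso.hil_eq, hil_freeModFin]

namespace Res

variable {M : PersMod k n} (R : Res M) (r : Pt n)

lemma hil_zero :
    Hil (R.P 0) r = Module.finrank k (LinearMap.range ((R.d 0).app r)) + Hil M r := by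
  have h := LinearMap.finrank_range_add_finrank_ker (R.aug.app r)
  rw [LinearMap.range_eq_top.mpr (R.aug_surj r), finrank_top, ← R.exact_zero r] at h
  rw [Hil, Hil]
  omega

lemma hil_succ (j : ℕ) :
    Hil (R.P (j + 1)) r = Module.finrank k (LinearMap.range ((R.d j).app r))
      + Module.finrank k (LinearMap.range ((R.d (j + 1)).app r)) := by
  have h := LinearMap.finrank_range_add_finrank_ker ((R.d j).app r)
  rw [← R.exact_succ j r] at h
  rw [Hil]
  omega

lemma range_d_len_eq_bot : LinearMap.range ((R.d R.len).app r) = ⊥ := by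
  refine LinearMap.range_eq_bot.mpr (LinearMap.ext fun x => ?_)
  rw [R.vanish _ R.len.lt_succ_self r x, map_zero, LinearMap.zero_apply]

/-- Euler characteristic along the resolution: the ranks of the images telescope. -/
lemma sum_range_neg_one_pow_mul_hil (ℓ : ℕ) :
    ∑ j ∈ Finset.range (ℓ + 1), (-1 : ℤ) ^ j * Hil (R.P j) r
      = Hil M r + (-1 : ℤ) ^ ℓ * Module.finrank k (LinearMap.range ((R.d ℓ).app r)) := by
  induction ℓ with
  | zero => simp [R.hil_zero r, add_comm]
  | succ ℓ ih =>
    rw [Finset.sum_range_succ, ih, R.hil_succ r ℓ, pow_succ]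
    push_cast
    ring

lemma hil_eq_sum_range :
    (Hil M r : ℤ) = ∑ j ∈ Finset.range (R.len + 1), (-1 : ℤ) ^ j * Hil (R.P j) r := by
  rw [R.sum_range_neg_one_pow_mul_hil r, R.range_d_len_eq_bot r, finrank_bot, Nat.cast_zero,
    mul_zero, add_zero]

end Res

lemma IsBettiOf.hil_eq {M : PersMod k n} {S : SignedBarcode n} (hS : IsBettiOf M S) (r : Pt n) :
    (Hil M r : ℤ) = countLe S.1 r - countLe S.2 r := by
  obtain ⟨R, B, ⟨hfree, -⟩, rfl⟩ := hS
  rw [countLe_evenPart_sub_oddPart, R.hil_eq_sum_range r]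
  simp only [fun j => (hfree j).hil_eq r]

lemma IsBettiOf.eq_add_of_isMinHilbDecomp {M P Q : PersMod k n} {BP BQ : Multiset (Pt n)}
    {S : SignedBarcode n} (hS : IsBettiOf M S)
    (hPQ : IsMinHilbDecomp (fun x => (Hil M x : ℤ)) P Q BP BQ) :
    ∃ D, S = (BP + D, BQ + D) := by
  obtain ⟨hP, hQ, hHil, hdisj⟩ := hPQ
  have hsum : S.1 + BQ = BP + S.2 := add_eq_add_of_countLe_sub_eq fun r => by
    rw [← hS.hil_eq, ← hP.hil_eq, ← hQ.hil_eq]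
    exact hHil r
  obtain ⟨D, h1, h2⟩ := Multiset.exists_eq_add_of_add_eq_add_of_disjoint hsum hdisj
  exact ⟨D, Prod.ext h1 h2⟩

lemma l1dist_nonneg (x y : Pt n) : 0 ≤ l1dist x y :=
  Finset.sum_nonneg fun _ _ => abs_nonneg _

lemma l1dist_self (x : Pt n) : l1dist x x = 0 := by
  simp [l1dist]

lemma l1dist_triangle (x y z : Pt n) : l1dist x z ≤ l1dist x y + l1dist y z := by
  rw [l1dist, l1dist, l1dist, ← Finset.sum_add_distrib]
  exact Finset.sum_le_sum fun _ _ => abs_sub_le _ _ _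

lemma matchCost_cons (p : Pt n × Pt n) (m : Multiset (Pt n × Pt n)) :
    matchCost (p ::ₘ m) = l1dist p.1 p.2 + matchCost m := by
  simp [matchCost]

/-- A point `x` on both sides of a matching can be cut out: the pairs `(x, b)` and `(a, x)`
are replaced by `(a, b)`, which costs no more by the triangle inequality. -/
lemma exists_matchCost_le_of_cons_cons {x : Pt n} {A B : Multiset (Pt n)}
    {m : Multiset (Pt n × Pt n)} (h1 : m.map Prod.fst = x ::ₘ A)
    (h2 : m.map Prod.snd = x ::ₘ B) :
    ∃ m' : Multiset (Pt n × Pt n), m'.map Prod.fst = A ∧ m'.map Prod.snd = B ∧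
      matchCost m' ≤ matchCost m := by
  obtain ⟨p, hp, hpx⟩ := Multiset.mem_map.mp (h1 ▸ Multiset.mem_cons_self x A)
  obtain ⟨m₀, rfl⟩ : ∃ m₀, m = p ::ₘ m₀ := ⟨m.erase p, (Multiset.cons_erase hp).symm⟩
  rw [Multiset.map_cons, hpx, Multiset.cons_inj_right] at h1
  rw [Multiset.map_cons] at h2
  by_cases hp2 : p.2 = x
  · rw [hp2, Multiset.cons_inj_right] at h2
    refine ⟨m₀, h1, h2, ?_⟩
    rw [matchCost_cons]
    linarith [l1dist_nonneg p.1 p.2]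
  obtain ⟨q, hq, hqx⟩ : ∃ q ∈ m₀, q.2 = x := by
    have hx : x ∈ p.2 ::ₘ m₀.map Prod.snd := h2 ▸ Multiset.mem_cons_self x B
    rcases Multiset.mem_cons.mp hx with hx | hx
    · exact absurd hx.symm hp2
    · exact Multiset.mem_map.mp hx
  obtain ⟨m₁, rfl⟩ : ∃ m₁, m₀ = q ::ₘ m₁ := ⟨m₀.erase q, (Multiset.cons_erase hq).symm⟩
  rw [Multiset.map_cons, hqx, Multiset.cons_swap, Multiset.cons_inj_right] at h2
  refine ⟨(q.1, p.2) ::ₘ m₁, ?_, ?_, ?_⟩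
  · rwa [Multiset.map_cons] at h1 ⊢
  · rw [Multiset.map_cons, h2]
  · rw [matchCost_cons, matchCost_cons, matchCost_cons, hpx, ← hqx]
    linarith [l1dist_triangle q.1 q.2 p.2]

lemma wassDist_cons_cons (x : Pt n) (A B : Multiset (Pt n)) :
    wassDist (x ::ₘ A) (x ::ₘ B) = wassDist A B := by
  apply le_antisymm
  · refine sInf_le_sInf_of_isCoinitialFor ?_
    rintro _ ⟨m, hA, hB, rfl⟩
    refine ⟨_, ⟨(x, x) ::ₘ m, by rw [Multiset.map_cons, hA], by rw [Multiset.map_cons, hB],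
      rfl⟩, ?_⟩
    rw [matchCost_cons, l1dist_self, zero_add]
  · refine sInf_le_sInf_of_isCoinitialFor ?_
    rintro _ ⟨m, hA, hB, rfl⟩
    obtain ⟨m', hA', hB', hcost⟩ := exists_matchCost_le_of_cons_cons hA hB
    exact ⟨_, ⟨m', hA', hB', rfl⟩, ENNReal.ofReal_le_ofReal hcost⟩

lemma wassDist_add_add (A B C : Multiset (Pt n)) :
    wassDist (A + C) (B + C) = wassDist A B := by
  induction C using Multiset.induction with
  | empty => simp only [add_zero]
  | cons x C ih => rw [Multiset.add_cons, Multiset.add_cons, wassDist_cons_cons, ih]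

lemma dW1hat_add_add (B C : SignedBarcode n) (D D' : Multiset (Pt n)) :
    dW1hat (B.1 + D, B.2 + D) (C.1 + D', C.2 + D') = dW1hat B C := by
  rw [dW1hat, dW1hat, ← wassDist_add_add (B.1 + C.2) (C.1 + B.2) (D + D')]
  dsimp only
  congr 1 <;> abel

theorem dW1hat_minimal_hilbert_eq_betti_general
    {k : Type} [Field k] {n : ℕ}
    (M N : PersMod k n)
    (P Q P' Q' : PersMod k n) (BP BQ BP' BQ' : Multiset (Pt n))
    (hMd : IsMinHilbDecomp (fun x => (Hil M x : ℤ)) P Q BP BQ)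
    (hNd : IsMinHilbDecomp (fun x => (Hil N x : ℤ)) P' Q' BP' BQ')
    (SM SN : SignedBarcode n) (hSM : IsBettiOf M SM) (hSN : IsBettiOf N SN) :
    dW1hat (BP, BQ) (BP', BQ') = dW1hat SM SN := by
  obtain ⟨D, rfl⟩ := hSM.eq_add_of_isMinHilbDecomp hMd
  obtain ⟨D', rfl⟩ := hSN.eq_add_of_isMinHilbDecomp hNd
  exact (dW1hat_add_add (BP, BQ) (BP', BQ') D D').symm

/-- **Equality part of Theorem 1.5.** The signed 1-Wasserstein distance does not
distinguish minimal Hilbert decompositions from Betti signed barcodes: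
`d̂_{W¹}(ĤB(M), ĤB(N)) = d̂_{W¹}(ℬβ(M), ℬβ(N))`. -/
theorem dW1hat_minimal_hilbert_eq_betti
    {k : Type} [Field k] {n : ℕ}
    (M N : PersMod k n) (hM : FinitelyPresentable M) (hN : FinitelyPresentable N)
    (P Q P' Q' : PersMod k n) (BP BQ BP' BQ' : Multiset (Pt n))
    (hMd : IsMinHilbDecomp (fun x => (Hil M x : ℤ)) P Q BP BQ)
    (hNd : IsMinHilbDecomp (fun x => (Hil N x : ℤ)) P' Q' BP' BQ')
    (SM SN : SignedBarcode n) (hSM : IsBettiOf M SM) (hSN : IsBettiOf N SN) :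
    dW1hat (BP, BQ) (BP', BQ') = dW1hat SM SN :=
  dW1hat_minimal_hilbert_eq_betti_general M N P Q P' Q' BP BQ BP' BQ' hMd hNd SM SN hSM hSN


end
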